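/- Let L be a cubic algebra, I a special subalgebra of L, and g ∈ L. Then I_g := {Δ(g ∨ f, f) : f ∈ I} is a special subalgebra of L. -/

import Mathlib

/-!
For `x ≤ q`, the element `Δ(q, x)` is the meet of `q` and `Δ(⊤, q·x)`, and an element `a` with
`a ⊔ X = a ⊔ Y = ⊤` also satisfies `a ⊔ (X ∧ Y) = ⊤`; these two facts drive everything. Write
`e_f = Δ(g ⊔ f, f)`. The map `f ↦ e_f` is monotone, and for `y ≥ e_f` the element
`F = Δ(f ⊔ y, y) ≥ f` has `e_F = y`, so `I_g` is an upset. Since `Δ(⊤, e_{f'})` is the analogous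
shift of `Δ(⊤, f')` by `Δ(⊤, g)`, compatibility of `e_f` and `e_{f'}` follows from
`f ⊔ Δ(⊤, f') = ⊤`. If `m` is the meet of `e_f` and `e_{f'}`, compatibility of `f` and `f'` makes
`Δ(V, m)` a common lower bound of `f` and `f'`, where `V` is the meet of `g ⊔ f` and `g ⊔ f'`
above `m`; so `f ∧ f'` exists, lies in `I`, and `e_{f ∧ f'} ≤ m`.
-/

universe u

/-- A cubic algebra: a join-semilattice with greatest element `⊤` and a binary
operation `Δ` satisfying the axioms of Bailey–Oliveira. `dot x y` is the derived
implication operation `x·y = Δ(⊤, Δ(x ⊔ y, y)) ⊔ y`. -/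
class CubicAlgebra (L : Type u) extends SemilatticeSup L, OrderTop L where
  Δ : L → L → L
  dot : L → L → L
  dot_def : ∀ x y : L, dot x y = Δ ⊤ (Δ (x ⊔ y) y) ⊔ y
  Δ_join : ∀ x y : L, x ≤ y → Δ y x ⊔ x = y
  Δ_comp : ∀ x y z : L, x ≤ y → y ≤ z → Δ z (Δ y x) = Δ (Δ z y) (Δ z x)
  Δ_invol : ∀ x y : L, x ≤ y → Δ y (Δ y x) = x
  Δ_mono : ∀ x y z : L, x ≤ y → y ≤ z → Δ z x ≤ Δ z y
  dot_dot : ∀ x y : L, dot (dot x y) y = x ⊔ y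
  dot_exch : ∀ x y z : L, dot x (dot y z) = dot y (dot x z)

namespace CubicAlgebra

variable {L : Type u} [CubicAlgebra L]

/-- `a ∼ b` iff `Δ(a ⊔ b, a) = b`. -/
def sim (a b : L) : Prop := Δ (a ⊔ b) a = b

/-- `m` is the greatest lower bound of `a` and `b`. -/
def IsMeet (a b m : L) : Prop := m ≤ a ∧ m ≤ b ∧ ∀ c : L, c ≤ a → c ≤ b → c ≤ m

/-- A special subalgebra of a cubic algebra. -/
structure IsSpecial (S : Set L) : Prop where
  top_mem : (⊤ : L) ∈ S
  upward : ∀ x ∈ S, ∀ y : L, x ≤ y → y ∈ S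
  dot_mem : ∀ x ∈ S, ∀ y ∈ S, dot x y ∈ S
  compat : ∀ x ∈ S, ∀ y ∈ S, x ⊔ Δ ⊤ y = ⊤
  meet_mem : ∀ x ∈ S, ∀ y ∈ S, ∀ m : L, IsMeet x y m → m ∈ S

/-- `A ∨ B` for sets: all existing meets `a ∧ b`, `a ∈ A`, `b ∈ B`. -/
def svee (A B : Set L) : Set L := {z | ∃ a ∈ A, ∃ b ∈ B, IsMeet a b z}

/-- `J → I` for sets. -/
def sarrow (J I : Set L) : Set L := {h | h ∈ I ∧ ∀ g ∈ J, h ⊔ g = ⊤}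

/-- `Δ(J, I) := J ∨ Δ(⊤, J → I)`. -/
def sDelta (J I : Set L) : Set L := svee J ((fun b => Δ ⊤ b) '' sarrow J I)

/-- `I_g := {Δ(g ⊔ f, f) : f ∈ I}`. -/
def shift (I : Set L) (g : L) : Set L := {z | ∃ f ∈ I, z = Δ (g ⊔ f) f}

end CubicAlgebra

namespace CubicAlgebra

variable {L : Type u} [CubicAlgebra L] {a b c f f' g m p q x y z E V X Y : L}

theorem Δ_le (h : x ≤ y) : Δ y x ≤ y :=
  le_sup_left.trans_eq (Δ_join x y h)

theorem Δ_self (y : L) : Δ y y = y := by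
  refine le_antisymm (Δ_le le_rfl) ?_
  calc y = Δ y (Δ y y) := (Δ_invol y y le_rfl).symm
    _ ≤ Δ y y := Δ_mono _ _ _ (Δ_le le_rfl) le_rfl

theorem Δ_top_Δ_top (x : L) : Δ ⊤ (Δ ⊤ x) = x := Δ_invol x ⊤ le_top

theorem Δ_top_mono (h : x ≤ y) : Δ ⊤ x ≤ Δ ⊤ y := Δ_mono x y ⊤ h le_top

theorem Δ_top_top : Δ ⊤ (⊤ : L) = ⊤ := Δ_self ⊤

theorem sup_Δ_top_self (x : L) : x ⊔ Δ ⊤ x = ⊤ := by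
  rw [sup_comm]
  exact Δ_join x ⊤ le_top

theorem Δ_top_sup (x y : L) : Δ ⊤ (x ⊔ y) = Δ ⊤ x ⊔ Δ ⊤ y := by
  refine le_antisymm ?_ (sup_le (Δ_top_mono le_sup_left) (Δ_top_mono le_sup_right))
  have h : x ⊔ y ≤ Δ ⊤ (Δ ⊤ x ⊔ Δ ⊤ y) := by
    conv_lhs => rw [← Δ_top_Δ_top x, ← Δ_top_Δ_top y]
    exact sup_le (Δ_top_mono le_sup_left) (Δ_top_mono le_sup_right)
  simpa only [Δ_top_Δ_top] using Δ_top_mono h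

theorem Δ_top_sup_eq_top (h : a ⊔ Δ ⊤ b = ⊤) : Δ ⊤ a ⊔ b = ⊤ := by
  simpa only [Δ_top_sup, Δ_top_Δ_top, Δ_top_top] using congrArg (Δ ⊤) h

theorem Δ_top_Δ_sup (p x : L) :
    Δ ⊤ (Δ (p ⊔ x) x) = Δ (Δ ⊤ p ⊔ Δ ⊤ x) (Δ ⊤ x) := by
  rw [Δ_comp x (p ⊔ x) ⊤ le_sup_right le_top, Δ_top_sup]

theorem le_dot (x y : L) : y ≤ dot x y := by
  rw [dot_def]
  exact le_sup_right

theorem top_dot (y : L) : dot ⊤ y = y := by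
  rw [dot_def, top_sup_eq, Δ_top_Δ_top, sup_idem]

theorem dot_self (y : L) : dot y y = ⊤ := by
  rw [dot_def, sup_idem, Δ_self, sup_comm, sup_Δ_top_self]

theorem dot_eq_top_iff : dot a b = ⊤ ↔ a ≤ b := by
  constructor
  · intro h
    have h1 := dot_dot a b
    rw [h, top_dot] at h1
    exact le_sup_left.trans h1.ge
  · intro h
    calc dot a b = dot a (dot (dot a b) b) := by rw [dot_dot, sup_eq_right.mpr h]
      _ = dot (dot a b) (dot a b) := dot_exch a (dot a b) b
      _ = ⊤ := dot_self _

theorem dot_anti_left (h : a ≤ b) (z : L) : dot b z ≤ dot a z := by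
  rw [← dot_eq_top_iff, ← dot_exch, dot_dot, dot_eq_top_iff]
  exact h.trans le_sup_left

theorem dot_mono_right (a : L) (h : b ≤ c) : dot a b ≤ dot a c := by
  have key : a ≤ dot (dot a b) c :=
    calc a ≤ dot (dot c b) (a ⊔ b) := le_sup_left.trans (le_dot _ _)
      _ = dot (dot a b) (dot (dot c b) b) := by rw [dot_exch, dot_dot]
      _ = dot (dot a b) c := by rw [dot_dot, sup_eq_left.mpr h]
  rw [← dot_eq_top_iff, ← dot_exch, dot_eq_top_iff]
  exact key

theorem sup_dot (a b : L) : dot (a ⊔ b) b = dot a b := by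
  calc dot (a ⊔ b) b = dot (dot (dot a b) b) b := by rw [dot_dot a b]
    _ = dot a b := by rw [dot_dot, sup_eq_left.mpr (le_dot a b)]

theorem dot_eq_right_iff : dot a b = b ↔ a ⊔ b = ⊤ := by
  constructor
  · intro h
    rw [← dot_dot a b, h, dot_self]
  · intro h
    exact le_antisymm (dot_eq_top_iff.mp (by rw [dot_dot, h])) (le_dot a b)

theorem dot_le (hb : b ≤ c) (h : a ⊔ c = ⊤) : dot a b ≤ c :=
  (dot_mono_right a hb).trans_eq (dot_eq_right_iff.mpr h)

theorem sup_dot_eq_top (a b : L) : a ⊔ dot a b = ⊤ := by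
  refine eq_top_mono ?_ (sup_Δ_top_self (Δ (a ⊔ b) b))
  rw [dot_def]
  calc Δ (a ⊔ b) b ⊔ Δ ⊤ (Δ (a ⊔ b) b) ≤ a ⊔ b ⊔ Δ ⊤ (Δ (a ⊔ b) b) :=
        sup_le_sup_right (Δ_le le_sup_right) _
    _ = a ⊔ (Δ ⊤ (Δ (a ⊔ b) b) ⊔ b) := by ac_rfl

theorem dot_Δ (h : x ≤ q) : dot x (Δ q x) = Δ ⊤ x ⊔ Δ q x := by
  have hq : x ⊔ Δ q x = q := by
    rw [sup_comm]
    exact Δ_join x q h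
  rw [dot_def, hq, Δ_invol x q h]

theorem Δ_top_le_dot_Δ (h : x ≤ q) : Δ ⊤ x ≤ dot x (Δ q x) :=
  le_sup_left.trans_eq (dot_Δ h).symm

theorem Δ_top_dot (h : x ≤ q) : Δ ⊤ (dot q x) = Δ q x ⊔ Δ ⊤ x := by
  rw [dot_def, sup_eq_left.mpr h, Δ_top_sup, Δ_top_Δ_top]

def meetAbove (z X Y : L) : L := dot (dot X z ⊔ dot Y z) z

theorem meetAbove_comm (z X Y : L) : meetAbove z X Y = meetAbove z Y X := by
  rw [meetAbove, meetAbove, sup_comm]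

theorem isMeet_meetAbove (hX : z ≤ X) (hY : z ≤ Y) : IsMeet X Y (meetAbove z X Y) := by
  refine ⟨?_, ?_, fun u hu hu' => ?_⟩
  · exact (dot_anti_left le_sup_left z).trans_eq (by rw [dot_dot, sup_eq_left.mpr hX])
  · exact (dot_anti_left le_sup_right z).trans_eq (by rw [dot_dot, sup_eq_left.mpr hY])
  · rw [meetAbove, ← dot_eq_top_iff, dot_exch, dot_eq_top_iff]
    exact sup_le (dot_anti_left hu z) (dot_anti_left hu' z)

theorem le_dot_meetAbove (ha : a ≤ X) (hb : b ≤ Y) (z : L) : b ≤ dot a (meetAbove z X Y) := by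
  rw [meetAbove, ← dot_eq_top_iff, dot_exch b a, dot_exch b, dot_exch a, dot_eq_top_iff]
  exact sup_le ((dot_anti_left ha z).trans (dot_mono_right a (le_dot b z)))
    ((dot_anti_left hb z).trans (le_dot a _))

theorem isMeet_of_dot_sup_dot_eq_top (hX : z ≤ X) (hY : z ≤ Y)
    (h : dot X z ⊔ dot Y z = ⊤) : IsMeet X Y z := by
  simpa only [meetAbove, h, top_dot] using isMeet_meetAbove hX hY

theorem isMeet_Δ (h : x ≤ q) : IsMeet q (Δ ⊤ (dot q x)) (Δ q x) := by
  have hq : x ⊔ Δ q x = q := by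
    rw [sup_comm]
    exact Δ_join x q h
  refine isMeet_of_dot_sup_dot_eq_top (Δ_le h) (by rw [Δ_top_dot h]; exact le_sup_left) ?_
  have hdot : dot q (Δ q x) = Δ ⊤ x ⊔ Δ q x := by
    calc dot q (Δ q x) = dot (x ⊔ Δ q x) (Δ q x) := by rw [hq]
      _ = Δ ⊤ x ⊔ Δ q x := by rw [sup_dot, dot_Δ h]
  rw [Δ_top_dot h, sup_comm (Δ q x), sup_dot, hdot]
  exact eq_top_mono (sup_le_sup_right le_sup_left _) (sup_dot_eq_top _ _)

theorem IsMeet.sup_eq_top (hm : IsMeet X Y m) (hX : a ⊔ X = ⊤) (hY : a ⊔ Y = ⊤) :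
    a ⊔ m = ⊤ :=
  dot_eq_right_iff.mp
    (le_antisymm (hm.2.2 _ (dot_le hm.1 hX) (dot_le hm.2.1 hY)) (le_dot a m))

theorem Δ_le_Δ_of_isMeet (hx : x ≤ q) (hV : V ≤ q) (hq : q ≤ V ⊔ x) (hE : IsMeet x V E) :
    Δ V E ≤ Δ q x := by
  refine (isMeet_Δ hx).2.2 _ ((Δ_le hE.2.1).trans hV) ?_
  calc Δ V E ≤ Δ ⊤ (dot V E) := (isMeet_Δ hE.2.1).2.1
    _ ≤ Δ ⊤ (dot q x) := by
      refine Δ_top_mono ((dot_mono_right V hE.1).trans ?_)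
      rw [← sup_dot V x]
      exact dot_anti_left hq x

theorem Δ_top_sup_Δ_sup (p x : L) : Δ ⊤ p ⊔ Δ (p ⊔ x) x = ⊤ :=
  (isMeet_Δ le_sup_right).sup_eq_top
    (by rw [← sup_assoc, sup_comm (Δ ⊤ p), sup_Δ_top_self, top_sup_eq])
    (by rw [sup_dot, ← Δ_top_sup, sup_dot_eq_top, Δ_top_top])

theorem sup_Δ_sup_eq_top (hxy : x ⊔ y = ⊤) : Δ (p ⊔ x) x ⊔ Δ (Δ ⊤ p ⊔ y) y = ⊤ := by
  have hy : Δ ⊤ y ≤ p ⊔ Δ ⊤ y := le_sup_right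
  have h : dot p x ⊔ Δ (p ⊔ Δ ⊤ y) (Δ ⊤ y) = ⊤ := by
    refine (isMeet_Δ hy).sup_eq_top ?_ ?_
    · refine eq_top_mono ?_ (sup_dot_eq_top p x)
      exact sup_le (le_sup_left.trans le_sup_right) le_sup_left
    · rw [sup_dot]
      refine eq_top_mono (sup_le_sup (le_dot p x) ?_) hxy
      exact (Δ_top_Δ_top y).symm.trans_le (Δ_top_mono (le_dot _ _))
  have hc : Δ ⊤ (dot p x) ⊔ Δ (Δ ⊤ p ⊔ y) y = ⊤ := by
    simpa only [Δ_top_sup, Δ_top_Δ_sup, Δ_top_Δ_top, Δ_top_top] using congrArg (Δ ⊤) h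
  rw [sup_comm]
  refine (isMeet_Δ le_sup_right).sup_eq_top ?_ ?_
  · have hp := Δ_top_sup_Δ_sup (Δ ⊤ p) y
    rw [Δ_top_Δ_top, sup_comm] at hp
    exact eq_top_mono (sup_le_sup_left le_sup_left _) hp
  · rwa [sup_dot, sup_comm]

theorem Δ_sup_mono (g : L) (h : x ≤ y) : Δ (g ⊔ x) x ≤ Δ (g ⊔ y) y := by
  refine (isMeet_Δ le_sup_right).2.2 _ ((Δ_le le_sup_right).trans (sup_le_sup_left h g)) ?_
  calc Δ (g ⊔ x) x ≤ Δ ⊤ (dot (g ⊔ x) x) := (isMeet_Δ le_sup_right).2.1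
    _ ≤ Δ ⊤ (dot (g ⊔ y) y) := by
      rw [sup_dot, sup_dot]
      exact Δ_top_mono (dot_mono_right g h)

theorem le_Δ_sup_of_Δ_sup_le (h : Δ (g ⊔ f) f ≤ y) : f ≤ Δ (f ⊔ y) y := by
  refine (isMeet_Δ le_sup_right).2.2 f le_sup_left ?_
  calc f = Δ ⊤ (Δ ⊤ f) := (Δ_top_Δ_top f).symm
    _ ≤ Δ ⊤ (dot f y) := Δ_top_mono ((Δ_top_le_dot_Δ le_sup_right).trans (dot_mono_right f h))
    _ = Δ ⊤ (dot (f ⊔ y) y) := by rw [sup_dot]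

theorem sup_Δ_sup_eq_sup (h : Δ (g ⊔ f) f ≤ y) : g ⊔ Δ (f ⊔ y) y = f ⊔ y := by
  have hg : g ≤ f ⊔ y :=
    calc g ≤ Δ (g ⊔ f) f ⊔ f := le_sup_left.trans_eq (Δ_join f _ le_sup_right).symm
      _ ≤ f ⊔ y := (sup_le_sup_right h f).trans_eq (sup_comm y f)
  have hgy : Δ ⊤ y ⊔ g = ⊤ := by
    refine Δ_top_sup_eq_top (eq_top_mono ?_ (Δ_top_sup_Δ_sup g f))
    rw [sup_comm]
    exact sup_le_sup_right h _
  have hy : y ≤ g ⊔ Δ (f ⊔ y) y := by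
    refine dot_eq_top_iff.mp (eq_top_mono (sup_le ?_ ?_) hgy)
    · exact (Δ_top_le_dot_Δ le_sup_right).trans (dot_mono_right y le_sup_right)
    · exact le_sup_left.trans (le_dot y _)
  refine le_antisymm (sup_le hg (Δ_le le_sup_right)) (sup_le ?_ hy)
  exact (le_Δ_sup_of_Δ_sup_le h).trans le_sup_right

theorem mem_shift_of_le {I : Set L} (hI : ∀ x ∈ I, ∀ y : L, x ≤ y → y ∈ I)
    (hx : x ∈ shift I g) (h : x ≤ y) : y ∈ shift I g := by
  obtain ⟨f, hf, rfl⟩ := hx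
  refine ⟨Δ (f ⊔ y) y, hI f hf _ (le_Δ_sup_of_Δ_sup_le h), ?_⟩
  rw [sup_Δ_sup_eq_sup h, Δ_invol y _ le_sup_right]

theorem Δ_meetAbove_le (hc : Δ ⊤ f ⊔ f' = ⊤) (hm : m ≤ Δ (g ⊔ f) f)
    (hm' : m ≤ Δ (g ⊔ f') f') : Δ (meetAbove m (g ⊔ f) (g ⊔ f')) m ≤ f := by
  set e := Δ (g ⊔ f) f
  set V := meetAbove m (g ⊔ f) (g ⊔ f')
  have hV : IsMeet (g ⊔ f) (g ⊔ f') V :=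
    isMeet_meetAbove (hm.trans (Δ_le le_sup_right)) (hm'.trans (Δ_le le_sup_right))
  have hE : IsMeet e V (meetAbove m e V) := isMeet_meetAbove hm (le_dot _ m)
  have hf : f ≤ V ⊔ e := by
    refine dot_eq_top_iff.mp (eq_top_mono (sup_le ?_ ?_) hc)
    · exact (Δ_top_le_dot_Δ le_sup_right).trans (dot_mono_right f le_sup_right)
    · exact (le_dot_meetAbove le_sup_right le_sup_right m).trans (dot_mono_right f le_sup_left)
  have hq : g ⊔ f ≤ V ⊔ e := sup_le ((hV.2.2 g le_sup_left le_sup_left).trans le_sup_left) hf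
  calc Δ V m ≤ Δ V (meetAbove m e V) := Δ_mono _ _ _ (le_dot _ m) hE.2.1
    _ ≤ Δ (g ⊔ f) e := Δ_le_Δ_of_isMeet (Δ_le le_sup_right) hV.1 hq hE
    _ = f := Δ_invol f _ le_sup_right

theorem exists_isMeet_of_le_Δ_sup (hc : f ⊔ Δ ⊤ f' = ⊤) (hm : m ≤ Δ (g ⊔ f) f)
    (hm' : m ≤ Δ (g ⊔ f') f') : ∃ w, IsMeet f f' w := by
  have hf' := Δ_meetAbove_le ((sup_comm _ _).trans hc) hm' hm
  rw [meetAbove_comm] at hf'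
  exact ⟨_, isMeet_meetAbove (Δ_meetAbove_le (Δ_top_sup_eq_top hc) hm hm') hf'⟩

end CubicAlgebra

open CubicAlgebra in
/-- `I_g = {Δ(g ⊔ f, f) : f ∈ I}` is a special subalgebra. -/
theorem shift_special {L : Type u} [CubicAlgebra L] (I : Set L)
    (hI : IsSpecial I) (g : L) : IsSpecial (shift I g) := by
  have hup : ∀ x ∈ shift I g, ∀ y : L, x ≤ y → y ∈ shift I g :=
    fun x hx y h => mem_shift_of_le hI.upward hx h
  refine ⟨⟨⊤, hI.top_mem, by rw [sup_top_eq, Δ_self]⟩, hup,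
    fun x _ y hy => hup y hy _ (le_dot x y), ?_, ?_⟩
  · rintro _ ⟨f, hf, rfl⟩ _ ⟨f', hf', rfl⟩
    rw [Δ_top_Δ_sup]
    exact sup_Δ_sup_eq_top (hI.compat f hf f' hf')
  · rintro _ ⟨f, hf, rfl⟩ _ ⟨f', hf', rfl⟩ m hm
    obtain ⟨w, hw⟩ := exists_isMeet_of_le_Δ_sup (hI.compat f hf f' hf') hm.1 hm.2.1
    refine hup _ ⟨w, hI.meet_mem f hf f' hf' w hw, rfl⟩ m ?_
    exact hm.2.2 _ (Δ_sup_mono g hw.1) (Δ_sup_mono g hw.2.1)
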